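/- arXiv:1601.07829 — 2 statements merged into one kernel-verified Lean document; each statement's English description precedes it below -/
import Mathlib

section
/- Let F be a finite field and a ∈ F. Then there exists b ∈ F such that the cubic polynomial X^3 - a·X^2 + b·X - 1 is irreducible over F. -/
open Polynomial

theorem stmt_0 (F : Type*) [Field F] [Finite F] (a : F) :
    ∃ b : F, Irreducible (X ^ 3 - C a * X ^ 2 + C b * X - 1 : F[X]) := by
  have : Fintype F := Fintype.ofFinite F
  set f : {c : F // c ≠ 0} → F := fun c => (1 + a * c.1 ^ 2 - c.1 ^ 3) * (c.1)⁻¹ with hf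
  classical
  have hns : ¬ Function.Surjective f := by
    intro h
    have h1 := Fintype.card_le_of_surjective f h
    have h2 : Fintype.card {c : F // c ≠ 0} < Fintype.card F :=
      Fintype.card_subtype_lt (x := 0) (by simp)
    omega
  simp only [Function.Surjective, not_forall] at hns
  obtain ⟨b, hb⟩ := hns
  rw [not_exists] at hb
  refine ⟨b, ?_⟩
  have hdeg : (X ^ 3 - C a * X ^ 2 + C b * X - 1 : F[X]).natDegree = 3 := by
    compute_degree!
  rw [irreducible_iff_roots_eq_zero_of_degree_le_three (by omega) (by omega)]
  apply Multiset.eq_zero_of_forall_notMem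
  intro r hr
  rw [mem_roots, IsRoot.def] at hr
  · simp only [eval_sub, eval_add, eval_mul, eval_pow, eval_X, eval_C, eval_one] at hr
    have hr0 : r ≠ 0 := by
      rintro rfl
      simp at hr
    apply hb ⟨r, hr0⟩
    show (1 + a * r ^ 2 - r ^ 3) * r⁻¹ = b
    field_simp
    linear_combination -hr
  · intro h
    rw [h, natDegree_zero] at hdeg
    exact absurd hdeg (by norm_num)
end

section
/- Let K* ⊆ K** be fields with K* relatively algebraically closed in K** (every element of K** algebraic over K* lies in K*). Let f ∈ K*[X_1,…,X_r] be an irreducible polynomial with constant coefficient 1. Then f remains irreducible in K**[X_1,…,X_r]. -/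
/-!
A polynomial irreducible over an algebraically closed field `F` stays irreducible over every
extension `E`: the coefficients of a factorisation over `E` generate a finitely generated
`F`-algebra, which has an `F`-point by the Nullstellensatz; specialising there gives a
factorisation over `F`, and since specialisation can only lower total degrees while degrees add,
nonconstant factors stay nonconstant. Hence over an algebraic closure of `K'`
every factor of `f` is, up to a scalar, the image of a polynomial over an algebraic closure of `K`.
Normalised to constant coefficient `1`, a factor of `f` over `K'` therefore has coefficients
algebraic over `K`, so in `K`, and a factorisation over `K'` descends to `K`.
-/

open MvPolynomial

theorem exists_algHom_of_finiteType (F R : Type*) [Field F] [IsAlgClosed F] [CommRing R]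
    [Nontrivial R] [Algebra F R] [Algebra.FiniteType F R] : Nonempty (R →ₐ[F] F) := by
  obtain ⟨m, _⟩ := Ideal.exists_maximal R
  let _ := Ideal.Quotient.field m
  have : Algebra.FiniteType F (R ⧸ m) :=
    .of_surjective (Ideal.Quotient.mkₐ F m) Ideal.Quotient.mk_surjective
  have := finite_of_finite_type_of_isJacobsonRing F (R ⧸ m)
  exact ⟨IsAlgClosed.lift.comp (Ideal.Quotient.mkₐ F m)⟩

namespace MvPolynomial

variable {σ K L : Type*} [Field K] [Field L]

theorem isUnit_iff_ne_zero_and_totalDegree_eq_zero {p : MvPolynomial σ K} :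
    IsUnit p ↔ p ≠ 0 ∧ p.totalDegree = 0 := by
  refine ⟨fun hu => ⟨hu.ne_zero, (isUnit_iff_totalDegree_of_isReduced.mp hu).2⟩,
    fun ⟨h0, hd⟩ => isUnit_iff_totalDegree_of_isReduced.mpr
      ⟨isUnit_iff_ne_zero.mpr fun hc => ?_, hd⟩⟩
  exact h0 (by rw [totalDegree_eq_zero_iff_eq_C.mp hd, hc, C_0])

theorem totalDegree_map_le {R S : Type*} [CommSemiring R] [CommSemiring S] (φ : R →+* S)
    (p : MvPolynomial σ R) : (map φ p).totalDegree ≤ p.totalDegree :=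
  Finset.sup_mono (support_map_subset φ p)

theorem totalDegree_map_of_injective {R S : Type*} [CommSemiring R] [CommSemiring S]
    {φ : R →+* S} (hφ : Function.Injective φ) (p : MvPolynomial σ R) :
    (map φ p).totalDegree = p.totalDegree := by
  simp only [totalDegree, support_map_of_injective p hφ]

theorem isUnit_map_iff (φ : K →+* L) {p : MvPolynomial σ K} :
    IsUnit (map φ p) ↔ IsUnit p := by
  simp only [isUnit_iff_ne_zero_and_totalDegree_eq_zero,
    totalDegree_map_of_injective φ.injective, ne_eq,
    map_eq_zero_iff _ (map_injective φ φ.injective)]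

theorem irreducible_map_of_isAlgClosed [IsAlgClosed K] (φ : K →+* L) {p : MvPolynomial σ K}
    (hp : Irreducible p) : Irreducible (map φ p) := by
  classical
  let _ := φ.toAlgebra
  refine ⟨fun hu => hp.not_isUnit ((isUnit_map_iff φ).mp hu), fun a b hab => ?_⟩
  let R := Algebra.adjoin K ((a.coeffs ∪ b.coeffs : Finset L) : Set L)
  have : Algebra.FiniteType K R :=
    (Subalgebra.fg_iff_finiteType R).mp (Subalgebra.fg_adjoin_finset _)
  obtain ⟨χ⟩ := exists_algHom_of_finiteType K R
  have hχ : (χ : R →+* K).comp (algebraMap K R) = RingHom.id K := χ.comp_algebraMap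
  generalize (χ : R →+* K) = χ at hχ
  have hR : ∀ q : MvPolynomial σ L, q.coeffs ⊆ a.coeffs ∪ b.coeffs →
      q ∈ Set.range (map R.val.toRingHom) := fun q hq =>
    mem_range_map_iff_coeffs_subset.mpr fun x hx =>
      ⟨⟨x, Algebra.subset_adjoin (hq hx)⟩, rfl⟩
  obtain ⟨a₀, ha₀⟩ := hR a Finset.subset_union_left
  obtain ⟨b₀, hb₀⟩ := hR b Finset.subset_union_right
  have hval : Function.Injective R.val.toRingHom := Subtype.val_injective
  have hp₀ : p = map χ a₀ * map χ b₀ := by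
    have hlift : map (algebraMap K R) p = a₀ * b₀ :=
      map_injective _ hval (by rw [map_mul, ha₀, hb₀, ← hab, map_map]; rfl)
    rw [← map_mul, ← hlift, map_map, hχ, map_id]
  have hχa : map χ a₀ ≠ 0 := left_ne_zero_of_mul (by rw [← hp₀]; exact hp.ne_zero)
  have hχb : map χ b₀ ≠ 0 := right_ne_zero_of_mul (by rw [← hp₀]; exact hp.ne_zero)
  have hab0 : a * b ≠ 0 := by
    rw [← hab]; exact (map_ne_zero_iff _ (map_injective φ φ.injective)).mpr hp.ne_zero
  -- specialisation does not raise degrees, while degrees add up on both sides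
  have hdeg_a : (map χ a₀).totalDegree ≤ a.totalDegree :=
    ha₀ ▸ (totalDegree_map_le χ a₀).trans (totalDegree_map_of_injective hval a₀).ge
  have hdeg_b : (map χ b₀).totalDegree ≤ b.totalDegree :=
    hb₀ ▸ (totalDegree_map_le χ b₀).trans (totalDegree_map_of_injective hval b₀).ge
  have hdeg : (map χ a₀).totalDegree + (map χ b₀).totalDegree =
      a.totalDegree + b.totalDegree := by
    rw [← totalDegree_mul_of_isDomain hχa hχb, ← hp₀,
      ← totalDegree_mul_of_isDomain (left_ne_zero_of_mul hab0) (right_ne_zero_of_mul hab0),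
      ← hab, totalDegree_map_of_injective φ.injective]
  simp only [isUnit_iff_ne_zero_and_totalDegree_eq_zero]
  rcases hp.isUnit_or_isUnit hp₀ with hu | hu <;>
    rw [isUnit_iff_ne_zero_and_totalDegree_eq_zero] at hu
  · exact Or.inl ⟨left_ne_zero_of_mul hab0, by omega⟩
  · exact Or.inr ⟨right_ne_zero_of_mul hab0, by omega⟩

theorem exists_eq_C_mul_map_of_dvd_map [IsAlgClosed K] (φ : K →+* L) {f : MvPolynomial σ K}
    (hf : f ≠ 0) {q : MvPolynomial σ L} (hq : q ∣ map φ f) :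
    ∃ c m, q = C c * map φ m := by
  induction f using UniqueFactorizationMonoid.induction_on_prime generalizing q with
  | h₁ => exact absurd rfl hf
  | h₂ u hu =>
    obtain ⟨c, -, rfl⟩ := isUnit_iff_eq_C_of_isReduced.mp (isUnit_of_dvd_unit hq (hu.map _))
    exact ⟨c, 1, by rw [map_one, mul_one]⟩
  | h₃ f p hf0 hp ih =>
    rw [map_mul] at hq
    obtain ⟨d, e, hd, he, rfl⟩ := exists_dvd_and_dvd_of_dvd_mul hq
    obtain ⟨c, m, rfl⟩ := ih hf0 he
    rcases (irreducible_map_of_isAlgClosed φ hp.irreducible).dvd_iff.mp hd with hu | ⟨u, rfl⟩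
    · obtain ⟨c', -, rfl⟩ := isUnit_iff_eq_C_of_isReduced.mp hu
      exact ⟨c' * c, m, by rw [C_mul]; ring⟩
    · obtain ⟨c', -, hc'⟩ := isUnit_iff_eq_C_of_isReduced.mp u.isUnit
      exact ⟨c' * c, p * m, by rw [hc', C_mul, map_mul]; ring⟩

theorem exists_map_eq_of_dvd_map [IsAlgClosed K] (φ : K →+* L) {f : MvPolynomial σ K}
    (hf : f ≠ 0) {q : MvPolynomial σ L} (hq : q ∣ map φ f) (hq₁ : constantCoeff q = 1) :
    ∃ m, map φ m = q := by
  obtain ⟨c, m, rfl⟩ := exists_eq_C_mul_map_of_dvd_map φ hf hq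
  have hc : c * φ (constantCoeff m) = 1 := by
    rwa [map_mul, constantCoeff_C, constantCoeff_map] at hq₁
  refine ⟨C (constantCoeff m)⁻¹ * m, ?_⟩
  rw [map_mul, map_C, map_inv₀, inv_eq_of_mul_eq_one_left hc]

theorem mem_range_map_of_dvd_map {K' : Type*} [Field K'] [Algebra K K']
    (halg : ∀ z : K', IsAlgebraic K z → z ∈ Set.range (algebraMap K K'))
    {f : MvPolynomial σ K} (hf : f ≠ 0) {q : MvPolynomial σ K'}
    (hq : q ∣ map (algebraMap K K') f) (hq₁ : constantCoeff q = 1) :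
    q ∈ Set.range (map (algebraMap K K')) := by
  let ψ : AlgebraicClosure K →ₐ[K] AlgebraicClosure K' := IsAlgClosed.lift
  have hdvd : map (algebraMap K' (AlgebraicClosure K')) q ∣
      map (ψ : AlgebraicClosure K →+* AlgebraicClosure K') (map (algebraMap K _) f) := by
    rw [map_map, ψ.comp_algebraMap, IsScalarTower.algebraMap_eq K K' (AlgebraicClosure K'),
      ← map_map]
    exact map_dvd _ hq
  obtain ⟨m, hm⟩ := exists_map_eq_of_dvd_map _
    ((map_ne_zero_iff _ (map_injective _ (algebraMap K _).injective)).mpr hf) hdvd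
    (by rw [constantCoeff_map, hq₁, map_one])
  refine mem_range_map_iff_coeffs_subset.mpr fun x hx => halg x ?_
  obtain ⟨μ, -, rfl⟩ := mem_coeffs_iff.mp hx
  rw [← isAlgebraic_algebraMap_iff (algebraMap K' (AlgebraicClosure K')).injective, ← coeff_map,
    ← hm, coeff_map]
  exact (Algebra.IsAlgebraic.isAlgebraic _).algHom ψ

end MvPolynomial

theorem stmt_8 (K K' : Type*) [Field K] [Field K'] [Algebra K K']
    (halg : ∀ z : K', IsAlgebraic K z → z ∈ Set.range (algebraMap K K'))
    (r : ℕ) (f : MvPolynomial (Fin r) K) (hf : Irreducible f)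
    (hconst : MvPolynomial.coeff 0 f = 1) :
    Irreducible (MvPolynomial.map (algebraMap K K') f) := by
  refine ⟨fun hu => hf.not_isUnit ((MvPolynomial.isUnit_map_iff _).mp hu), fun g h hgh => ?_⟩
  have hgh₁ : constantCoeff g * constantCoeff h = 1 := by
    rw [← map_mul, ← hgh, constantCoeff_map, constantCoeff_eq, hconst, map_one]
  set c := constantCoeff g
  have hc : c ≠ 0 := left_ne_zero_of_mul_eq_one hgh₁
  -- rescale the factors to constant coefficient `1`; they then descend to `K`
  have hfac : C c⁻¹ * g * (C c * h) = map (algebraMap K K') f := by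
    rw [mul_mul_mul_comm, ← C_mul, inv_mul_cancel₀ hc, C_1, one_mul, hgh]
  obtain ⟨g₀, hg₀⟩ := mem_range_map_of_dvd_map halg hf.ne_zero (Dvd.intro _ hfac)
    (by rw [map_mul, constantCoeff_C, inv_mul_cancel₀ hc])
  obtain ⟨h₀, hh₀⟩ := mem_range_map_of_dvd_map halg hf.ne_zero (Dvd.intro_left _ hfac)
    (by rw [map_mul, constantCoeff_C, hgh₁])
  have hf₀ : f = g₀ * h₀ :=
    map_injective _ (algebraMap K K').injective (by rw [map_mul, hg₀, hh₀, hfac])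
  refine (hf.isUnit_or_isUnit hf₀).imp (fun hu => ?_) (fun hu => ?_)
  · exact isUnit_of_mul_isUnit_right (hg₀ ▸ (MvPolynomial.isUnit_map_iff _).mpr hu)
  · exact isUnit_of_mul_isUnit_right (hh₀ ▸ (MvPolynomial.isUnit_map_iff _).mpr hu)
end
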